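/- arXiv:1609.02357 — 3 statements merged into one kernel-verified Lean document; each statement's English description precedes it below -/
import Mathlib

section
/- Let {e,f} be a ρ_2-pair of a bipartite 4-colored graph Γ. Then the graph Γ' obtained by switching the pair is always connected. -/
/-- A 4-colored graph: a finite connected 4-regular multigraph without loops with a
proper edge-coloration by `Fin 4`, modeled by four fixed-point-free involutions
(one per color, pairing each vertex with its unique neighbor along the edge of
that color) whose group action is transitive (connectivity). -/
structure FourColoredGraph (V : Type) [Fintype V] [DecidableEq V] where
  inv : Fin 4 → Equiv.Perm V
  invol : ∀ c, inv c * inv c = 1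
  fpf : ∀ c v, inv c v ≠ v
  conn : ∀ v w : V, w ∈ MulAction.orbit (Subgroup.closure (Set.range inv)) v

variable {V : Type} [Fintype V] [DecidableEq V]

/-- The `S`-residue containing `w`: the connected component of `w` in the subgraph
with only the edges colored by colors in `S`. -/
def residF (inv : Fin 4 → Equiv.Perm V) (S : Set (Fin 4)) (w : V) : Set V :=
  MulAction.orbit (Subgroup.closure (inv '' S)) w

/-- The number of bicolored cycles (2-residues), with colors in `S`, meeting `R`. -/
noncomputable def nBic (inv : Fin 4 → Equiv.Perm V) (S : Set (Fin 4)) (R : Set V) : ℕ :=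
  {p : Finset (Fin 4) × Set V |
    ↑p.1 ⊆ S ∧ p.1.card = 2 ∧ ∃ w ∈ R, p.2 = residF inv ↑p.1 w}.ncard

/-- A 3-colored residue `R` (with colors `S`, `|S| = 3`) is ordinary when its
associated closed surface is a 2-sphere, i.e. its Euler characteristic
`χ = v - 3v/2 + f = f - v/2` equals `2`. -/
def OrdinaryRes (inv : Fin 4 → Equiv.Perm V) (S : Set (Fin 4)) (R : Set V) : Prop :=
  2 * nBic inv S R = R.ncard + 4

/-- A graph is contracted when for each color `c` either there is a unique
`ĉ`-residue or all `ĉ`-residues are singular. -/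
def Contracted (G : FourColoredGraph V) : Prop :=
  ∀ c : Fin 4,
    {R : Set V | ∃ w, R = residF G.inv {j | j ≠ c} w}.ncard = 1 ∨
    ∀ w : V, ¬ OrdinaryRes G.inv {j | j ≠ c} (residF G.inv {j | j ≠ c} w)

/-- `v` and `v'` form an `h`-dipole with (exactly the) connecting colors `D`,
`h = D.card`: they are joined by exactly the edges colored by `D` and lie in
different `(Δ ∖ D)`-residues. -/
def IsDipole (G : FourColoredGraph V) (v v' : V) (D : Finset (Fin 4)) : Prop :=
  1 ≤ D.card ∧ D.card ≤ 3 ∧ (∀ c, G.inv c v = v' ↔ c ∈ D) ∧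
    v' ∉ residF G.inv {d | d ∉ D} v

/-- `τ` realizes the switching of the pair of `c`-colored edges
`e = {a, inv c a}`, `f = {b, inv c b}` of the bipartite graph `G` (with
bipartition `β`): it is a fixed-point-free involution agreeing with `inv c`
outside the four endpoints and joining the endpoints of `e` and `f` in the
unique way preserving the bipartition. -/
def IsSwitch (G : FourColoredGraph V) (β : V → Bool) (a b : V) (c : Fin 4)
    (τ : Equiv.Perm V) : Prop :=
  τ * τ = 1 ∧ (∀ w, τ w ≠ w) ∧
  (∀ w, w ≠ a → w ≠ G.inv c a → w ≠ b → w ≠ G.inv c b → τ w = G.inv c w) ∧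
  (β b ≠ β a → τ a = b) ∧ (β b = β a → τ a = G.inv c b)

/-- Orbits of subgroups of permutation groups are invariant under elements of
the subgroup. -/
lemma orbit_step {K : Subgroup (Equiv.Perm V)} {σ : Equiv.Perm V} (hσ : σ ∈ K)
    {x w : V} (hx : x ∈ MulAction.orbit K w) : σ x ∈ MulAction.orbit K w := by
  obtain ⟨g, rfl⟩ := MulAction.mem_orbit_iff.mp hx
  exact MulAction.mem_orbit_iff.mpr ⟨⟨σ, hσ⟩ * g, rfl⟩

/-- Switching a `ρ₂`-pair `{e, f}` (two distinct equally colored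
edges sharing exactly two 2-residues) of a bipartite 4-colored graph always
yields a connected graph. -/
theorem rho2_switch_connected (G : FourColoredGraph V) (β : V → Bool)
    (hβ : ∀ (c : Fin 4) (w : V), β (G.inv c w) ≠ β w)
    (a b : V) (c : Fin 4) (hba : b ≠ a) (hbe : b ≠ G.inv c a)
    (j k : Fin 4) (hjc : j ≠ c) (hkc : k ≠ c) (hjk : j ≠ k)
    (hshj : b ∈ residF G.inv {c, j} a) (hshk : b ∈ residF G.inv {c, k} a)
    (hexact : ∀ i, i ≠ c → b ∈ residF G.inv {c, i} a → i = j ∨ i = k)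
    (τ : Equiv.Perm V) (hτ : IsSwitch G β a b c τ) :
    ∀ x y : V,
      y ∈ MulAction.orbit
        (Subgroup.closure (Set.range (fun d => if d = c then τ else G.inv d))) x := by
  classical
  obtain ⟨hτ1, hτ2, hτ3, hτ4, hτ5⟩ := hτ
  set s : Equiv.Perm V := G.inv c with hs
  -- basic involution facts
  have hinvol : ∀ (d : Fin 4) (w : V), G.inv d (G.inv d w) = w := by
    intro d w
    have := congrArg (fun g : Equiv.Perm V => g w) (G.invol d)
    simpa using this
  have hτinvol : ∀ w, τ (τ w) = w := by
    intro w
    have := congrArg (fun g : Equiv.Perm V => g w) hτ1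
    simpa using this
  have hβflip : ∀ (d : Fin 4) (x : V), β (G.inv d x) = !(β x) := by
    intro d x
    have := hβ d x
    revert this
    cases hb : β (G.inv d x) <;> cases hb2 : β x <;> simp
  -- the fourth color i
  obtain ⟨i, hic, hij, hik⟩ : ∃ i : Fin 4, i ≠ c ∧ i ≠ j ∧ i ≠ k := by
    have h4 : (({c, j, k} : Finset (Fin 4))ᶜ).Nonempty := by
      rw [← Finset.card_pos, Finset.card_compl]
      have h3 : ({c, j, k} : Finset (Fin 4)).card ≤ 3 :=
        (Finset.card_insert_le _ _).trans
          (by have := Finset.card_insert_le j ({k} : Finset (Fin 4)); rw [Finset.card_singleton] at this; omega)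
      simp only [Fintype.card_fin]
      omega
    obtain ⟨i, hi⟩ := h4
    simp only [Finset.mem_compl, Finset.mem_insert, Finset.mem_singleton, not_or] at hi
    exact ⟨i, hi.1, hi.2.1, hi.2.2⟩
  set t : Equiv.Perm V := G.inv i with ht
  -- the new generators and the orbit S of a
  set ι : Fin 4 → Equiv.Perm V := fun d => if d = c then τ else G.inv d with hι
  set H : Subgroup (Equiv.Perm V) := Subgroup.closure (Set.range ι) with hH
  set S : Set V := MulAction.orbit H a with hS
  have haS : a ∈ S := MulAction.mem_orbit_self a
  have hτH : τ ∈ H := Subgroup.subset_closure ⟨c, by simp [hι]⟩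
  have hdH : ∀ d : Fin 4, d ≠ c → G.inv d ∈ H := by
    intro d hd
    exact Subgroup.subset_closure ⟨d, by simp [hι, hd]⟩
  have tauS : ∀ x ∈ S, τ x ∈ S := fun x hx => orbit_step hτH hx
  have genS : ∀ (d : Fin 4), d ≠ c → ∀ x ∈ S, G.inv d x ∈ S :=
    fun d hd x hx => orbit_step (hdH d hd) hx
  -- the {c,i}-residue R of a
  set K : Subgroup (Equiv.Perm V) := Subgroup.closure (G.inv '' ({c, i} : Set (Fin 4)))
    with hK
  set R : Set V := MulAction.orbit K a with hR
  have hRresid : R = residF G.inv ({c, i} : Set (Fin 4)) a := rfl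
  have hsK : s ∈ K := Subgroup.subset_closure ⟨c, Or.inl rfl, rfl⟩
  have htK : t ∈ K := Subgroup.subset_closure ⟨i, Or.inr rfl, rfl⟩
  have hπK : ∀ m : ℕ, (s * t) ^ m ∈ K := fun m => pow_mem (mul_mem hsK htK) m
  have hbR : b ∉ R := by
    intro h
    rcases hexact i hic (hRresid ▸ h) with h' | h'
    · exact hij h'
    · exact hik h'
  have hsbR : s b ∉ R := by
    intro h
    have := orbit_step hsK h
    rw [hs, hinvol c b] at this
    exact hbR this
  -- parity along the {c,i}-walk
  have hβpar : ∀ m : ℕ, β (((s * t) ^ m) a) = β a := by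
    intro m
    induction m with
    | zero => simp
    | succ m ih =>
      rw [pow_succ']
      have hrw : ((s * t) * (s * t) ^ m) a = s (t (((s * t) ^ m) a)) := rfl
      rw [hrw, hs, ht, hβflip c, hβflip i, Bool.not_not, ih]
  -- key induction: the walk around the {c,i}-cycle stays in S (or we are done)
  have key : ∀ m : ℕ, ((s * t) ^ m) a ∈ S ∨ s a ∈ S := by
    intro m
    induction m with
    | zero => left; simpa using haS
    | succ m ih =>
      rcases ih with hz | h
      · set z : V := ((s * t) ^ m) a with hz'
        have hzR : z ∈ R := MulAction.mem_orbit_iff.mpr ⟨⟨_, hπK m⟩, rfl⟩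
        have htzS : t z ∈ S := genS i hic _ hz
        have htzR : t z ∈ R := orbit_step htK hzR
        by_cases hsa : t z = s a
        · right; rwa [hsa] at htzS
        · left
          have h1 : t z ≠ a := by
            intro h
            have hb1 : β (t z) = !(β z) := hβflip i z
            rw [h, hβpar m] at hb1
            exact (Bool.not_ne_self (β a)).symm hb1
          have h2 : t z ≠ b := fun h => hbR (h ▸ htzR)
          have h3 : t z ≠ s b := fun h => hsbR (h ▸ htzR)
          have hout : τ (t z) = G.inv c (t z) := hτ3 (t z) h1 hsa h2 h3
          have hmem : s (t z) ∈ S := by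
            rw [hs, ← hout]
            exact tauS _ htzS
          rw [pow_succ']
          exact hmem
      · right; exact h
  -- the other endpoint of e lies in S
  have hsaS : s a ∈ S := by
    have hm : 0 < orderOf ((s * t : Equiv.Perm V)) := orderOf_pos _
    rcases key (orderOf (s * t : Equiv.Perm V) - 1) with hz | h
    · have h1 : ((s * t) ^ orderOf (s * t : Equiv.Perm V)) a = a := by
        rw [pow_orderOf_eq_one]; rfl
      have h2 : (s * t : Equiv.Perm V) ^ orderOf (s * t : Equiv.Perm V)
          = (s * t) * (s * t) ^ (orderOf (s * t : Equiv.Perm V) - 1) := by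
        rw [← pow_succ']
        congr 1
        omega
      have h3 : s (t (((s * t) ^ (orderOf (s * t : Equiv.Perm V) - 1)) a)) = a := by
        conv_rhs => rw [← h1, h2]
        simp [Equiv.Perm.mul_apply]
      have h4 : t (((s * t) ^ (orderOf (s * t : Equiv.Perm V) - 1)) a) = s a := by
        have h5 := congrArg s h3
        rwa [hinvol c (t (((s * t) ^ (orderOf (s * t : Equiv.Perm V) - 1)) a))] at h5
      rw [← h4]
      exact genS i hic _ hz
    · exact h
  -- τ maps the four special points among themselves
  have hFclosed : ∀ w : V, (w = a ∨ w = s a ∨ w = b ∨ w = s b) →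
      (τ w = a ∨ τ w = s a ∨ τ w = b ∨ τ w = s b) := by
    intro w hw
    by_contra hcon
    push_neg at hcon
    obtain ⟨n1, n2, n3, n4⟩ := hcon
    have hout : τ (τ w) = G.inv c (τ w) := hτ3 (τ w) n1 n2 n3 n4
    rw [hτinvol w] at hout
    have hws : τ w = s w := by
      have h5 := congrArg (G.inv c) hout
      rw [hinvol c (τ w)] at h5
      exact h5.symm
    rcases hw with rfl | rfl | rfl | rfl
    · exact n2 hws
    · rw [hs, hinvol c] at hws; exact n1 hws
    · exact n4 hws
    · rw [hs, hinvol c] at hws; exact n3 hws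
  have hτa : τ a = b ∨ τ a = s b := by
    by_cases hb : β b = β a
    · right; exact hτ5 hb
    · left; exact hτ4 hb
  have hτsa : τ (s a) = b ∨ τ (s a) = s b := by
    rcases hFclosed (s a) (Or.inr (Or.inl rfl)) with h | h | h | h
    · exfalso
      have hsa : s a = τ a := by
        have h5 := congrArg τ h
        rwa [hτinvol] at h5
      rcases hτa with h' | h'
      · rw [h'] at hsa; exact hbe hsa.symm
      · rw [h'] at hsa
        have hab : a = b := by
          have := congrArg s hsa
          rwa [hs, hinvol c, hinvol c] at this
        exact hba hab.symm
    · exact absurd h (hτ2 (s a))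
    · exact Or.inl h
    · exact Or.inr h
  -- both endpoints of f lie in S
  have hbS : b ∈ S ∧ s b ∈ S := by
    have hne : τ a ≠ τ (s a) := by
      intro h
      exact G.fpf c a (τ.injective h).symm
    have h1 : τ a ∈ S := tauS a haS
    have h2 : τ (s a) ∈ S := tauS _ hsaS
    rcases hτa with ha' | ha' <;> rcases hτsa with hb' | hb'
    · exact absurd (ha'.trans hb'.symm) hne
    · exact ⟨ha' ▸ h1, hb' ▸ h2⟩
    · exact ⟨hb' ▸ h2, ha' ▸ h1⟩
    · exact absurd (ha'.trans hb'.symm) hne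
  -- S is closed under all old generators
  have Sclosed : ∀ (d : Fin 4), ∀ x ∈ S, G.inv d x ∈ S := by
    intro d x hx
    by_cases hdc : d = c
    · subst hdc
      by_cases h1 : x = a
      · rw [h1]; exact hsaS
      by_cases h2 : x = s a
      · rw [h2]
        have : G.inv d (s a) = a := by rw [hs, hinvol]
        rw [this]; exact haS
      by_cases h3 : x = b
      · rw [h3]; exact hbS.2
      by_cases h4 : x = s b
      · rw [h4]
        have : G.inv d (s b) = b := by rw [hs, hinvol]
        rw [this]; exact hbS.1
      · rw [← hτ3 x h1 h2 h3 h4]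
        exact tauS x hx
    · exact genS d hdc x hx
  -- hence S is invariant under the whole old group, so S = univ
  have hiff : ∀ g ∈ Subgroup.closure (Set.range G.inv), ∀ x, x ∈ S ↔ g x ∈ S := by
    intro g hg
    induction hg using Subgroup.closure_induction with
    | mem σ hσ =>
      obtain ⟨d, rfl⟩ := hσ
      intro x
      constructor
      · exact Sclosed d x
      · intro h
        have := Sclosed d _ h
        rwa [hinvol d] at this
    | one => intro x; simp
    | mul g1 g2 _ _ ih1 ih2 =>
      intro x
      have hrw : (g1 * g2) x = g1 (g2 x) := rfl
      rw [hrw, ← ih1 (g2 x), ← ih2 x]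
    | inv g _ ih =>
      intro x
      have := ih (g⁻¹ x)
      rw [show g (g⁻¹ x) = x from g.apply_symm_apply x] at this
      exact this.symm
  have hall : ∀ x, x ∈ S := by
    intro x
    obtain ⟨⟨g, hg⟩, hgx⟩ := MulAction.mem_orbit_iff.mp (G.conn a x)
    have hga : g a = x := hgx
    rw [← hga]
    exact (hiff g hg a).mp haS
  -- conclude
  intro x y
  obtain ⟨gx, hgx⟩ := MulAction.mem_orbit_iff.mp (hall x)
  obtain ⟨gy, hgy⟩ := MulAction.mem_orbit_iff.mp (hall y)
  refine MulAction.mem_orbit_iff.mpr ⟨gy * gx⁻¹, ?_⟩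
  rw [mul_smul, ← hgx, inv_smul_smul, hgy]
end

section
/- Switching a ρ_3-pair of a bipartite 4-colored graph yields a (possibly disconnected) properly 4-edge-colored 4-regular graph with at most two connected components, each of which is bipartite. -/
variable {V : Type} [Fintype V] [DecidableEq V]

section SwitchHelpers

private lemma bool_aux : ∀ x y z w : Bool, x ≠ z → y ≠ w → z ≠ w → x ≠ y := by decide

private lemma smul_mem_orbit_of_mem {G : Type*} [Group G] {K : Subgroup G} {α : Type*}
    [MulAction G α] {k : G} (hk : k ∈ K) {x p : α}
    (hx : x ∈ MulAction.orbit K p) : k • x ∈ MulAction.orbit K p := by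
  obtain ⟨g, rfl⟩ := hx
  exact ⟨⟨k, hk⟩ * g, by simp [mul_smul, Subgroup.smul_def]⟩

set_option linter.unusedSectionVars false

private lemma invariant_of_gens {gen : Fin 4 → Equiv.Perm V}
    (ginvol : ∀ d, gen d * gen d = 1)
    {T : Set V} (hT : ∀ d x, x ∈ T → gen d x ∈ T)
    {v w : V} (hw : w ∈ MulAction.orbit (Subgroup.closure (Set.range gen)) v)
    (hv : v ∈ T) : w ∈ T := by
  obtain ⟨⟨g, hg⟩, rfl⟩ := hw
  have key : ∀ g : Equiv.Perm V, g ∈ Subgroup.closure (Set.range gen) →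
      (∀ x ∈ T, g x ∈ T) ∧ (∀ x ∈ T, g⁻¹ x ∈ T) := by
    intro g hg
    induction hg using Subgroup.closure_induction with
    | mem x hx =>
        obtain ⟨d, rfl⟩ := hx
        have hxinv : (gen d)⁻¹ = gen d := by
          rw [inv_eq_iff_mul_eq_one]; exact ginvol d
        exact ⟨fun x hx => hT d x hx, by rw [hxinv]; exact fun x hx => hT d x hx⟩
    | one => exact ⟨fun x hx => by simpa using hx, fun x hx => by simpa using hx⟩
    | mul x y hx hy ihx ihy =>
        refine ⟨fun z hz => ?_, fun z hz => ?_⟩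
        · rw [Equiv.Perm.mul_apply]; exact ihx.1 _ (ihy.1 z hz)
        · rw [mul_inv_rev, Equiv.Perm.mul_apply]; exact ihy.2 _ (ihx.2 z hz)
    | inv x hx ih => exact ⟨ih.2, by simpa using ih.1⟩
  exact (key g hg).1 v hv

private lemma orbits_le_two (gen gen' : Fin 4 → Equiv.Perm V)
    (ginvol : ∀ d, gen d * gen d = 1)
    (conn : ∀ v w : V, w ∈ MulAction.orbit (Subgroup.closure (Set.range gen)) v)
    (p q : V)
    (hstep : ∀ d x, x ∈ MulAction.orbit (Subgroup.closure (Set.range gen')) p ∪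
        MulAction.orbit (Subgroup.closure (Set.range gen')) q →
        gen d x ∈ MulAction.orbit (Subgroup.closure (Set.range gen')) p ∪
        MulAction.orbit (Subgroup.closure (Set.range gen')) q) :
    {O : Set V | ∃ w, O = MulAction.orbit (Subgroup.closure (Set.range gen')) w}.ncard ≤ 2 := by
  set K := Subgroup.closure (Set.range gen') with hK
  have hsub : {O : Set V | ∃ w, O = MulAction.orbit K w} ⊆
      {MulAction.orbit K p, MulAction.orbit K q} := by
    rintro O ⟨w, rfl⟩
    have hw : w ∈ MulAction.orbit K p ∪ MulAction.orbit K q :=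
      invariant_of_gens ginvol hstep (conn p w) (Or.inl (MulAction.mem_orbit_self p))
    rcases hw with h | h
    · exact Or.inl (MulAction.orbit_eq_iff.mpr h)
    · exact Or.inr (MulAction.orbit_eq_iff.mpr h)
  calc {O : Set V | ∃ w, O = MulAction.orbit K w}.ncard
      ≤ ({MulAction.orbit K p, MulAction.orbit K q} : Set (Set V)).ncard :=
        Set.ncard_le_ncard hsub (Set.toFinite _)
    _ ≤ 2 := by
        have h1 := Set.ncard_insert_le (MulAction.orbit K p) {MulAction.orbit K q}
        simpa [Set.ncard_singleton] using h1

private lemma switch_invol (G : FourColoredGraph V) (a b : V) (c : Fin 4) (τ : Equiv.Perm V)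
    (hinv : ∀ x, G.inv c (G.inv c x) = x)
    (hτout : ∀ w, w ≠ a → w ≠ G.inv c a → w ≠ b → w ≠ G.inv c b → τ w = G.inv c w)
    (p1 : τ (τ a) = a) (p2 : τ (τ (G.inv c a)) = G.inv c a)
    (p3 : τ (τ b) = b) (p4 : τ (τ (G.inv c b)) = G.inv c b) : τ * τ = 1 := by
  ext w
  simp only [Equiv.Perm.mul_apply, Equiv.Perm.one_apply]
  by_cases h1 : w = a; · subst h1; exact p1
  by_cases h2 : w = G.inv c a; · subst h2; exact p2
  by_cases h3 : w = b; · subst h3; exact p3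
  by_cases h4 : w = G.inv c b; · subst h4; exact p4
  rw [hτout w h1 h2 h3 h4]
  have g1 : G.inv c w ≠ a := fun h => h2 (by rw [← hinv w, h])
  have g2 : G.inv c w ≠ G.inv c a := fun h => h1 ((G.inv c).injective h)
  have g3 : G.inv c w ≠ b := fun h => h4 (by rw [← hinv w, h])
  have g4 : G.inv c w ≠ G.inv c b := fun h => h3 ((G.inv c).injective h)
  rw [hτout _ g1 g2 g3 g4, hinv]

private lemma switch_fpf (G : FourColoredGraph V) (a b : V) (c : Fin 4) (τ : Equiv.Perm V)
    (hτout : ∀ w, w ≠ a → w ≠ G.inv c a → w ≠ b → w ≠ G.inv c b → τ w = G.inv c w)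
    (q1 : τ a ≠ a) (q2 : τ (G.inv c a) ≠ G.inv c a)
    (q3 : τ b ≠ b) (q4 : τ (G.inv c b) ≠ G.inv c b) : ∀ w, τ w ≠ w := by
  intro w
  by_cases h1 : w = a; · subst h1; exact q1
  by_cases h2 : w = G.inv c a; · subst h2; exact q2
  by_cases h3 : w = b; · subst h3; exact q3
  by_cases h4 : w = G.inv c b; · subst h4; exact q4
  rw [hτout w h1 h2 h3 h4]; exact G.fpf c w

private lemma switch_bip (G : FourColoredGraph V) (β : V → Bool)
    (hβ : ∀ (c : Fin 4) (w : V), β (G.inv c w) ≠ β w)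
    (a b : V) (c : Fin 4) (τ : Equiv.Perm V)
    (hτout : ∀ w, w ≠ a → w ≠ G.inv c a → w ≠ b → w ≠ G.inv c b → τ w = G.inv c w)
    (r1 : β (τ a) ≠ β a) (r2 : β (τ (G.inv c a)) ≠ β (G.inv c a))
    (r3 : β (τ b) ≠ β b) (r4 : β (τ (G.inv c b)) ≠ β (G.inv c b)) :
    ∀ w, β (τ w) ≠ β w := by
  intro w
  by_cases h1 : w = a; · subst h1; exact r1
  by_cases h2 : w = G.inv c a; · subst h2; exact r2
  by_cases h3 : w = b; · subst h3; exact r3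
  by_cases h4 : w = G.inv c b; · subst h4; exact r4
  rw [hτout w h1 h2 h3 h4]; exact hβ c w

private lemma switch_orbits (G : FourColoredGraph V) (a b : V) (c : Fin 4) (τ : Equiv.Perm V)
    (hinv : ∀ x, G.inv c (G.inv c x) = x)
    (hτout : ∀ w, w ≠ a → w ≠ G.inv c a → w ≠ b → w ≠ G.inv c b → τ w = G.inv c w)
    (hb : b ∈ MulAction.orbit
        (Subgroup.closure (Set.range (fun d => if d = c then τ else G.inv d))) a ∪
      MulAction.orbit
        (Subgroup.closure (Set.range (fun d => if d = c then τ else G.inv d))) (G.inv c a))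
    (hB : G.inv c b ∈ MulAction.orbit
        (Subgroup.closure (Set.range (fun d => if d = c then τ else G.inv d))) a ∪
      MulAction.orbit
        (Subgroup.closure (Set.range (fun d => if d = c then τ else G.inv d))) (G.inv c a)) :
    {O : Set V | ∃ w, O = MulAction.orbit
        (Subgroup.closure (Set.range (fun d => if d = c then τ else G.inv d))) w}.ncard ≤ 2 := by
  set gen' : Fin 4 → Equiv.Perm V := fun d => if d = c then τ else G.inv d with hgen'
  set K := Subgroup.closure (Set.range gen') with hKdef
  have hK : ∀ d, gen' d ∈ K := fun d => Subgroup.subset_closure ⟨d, rfl⟩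
  have hτK : τ ∈ K := by have := hK c; simpa [hgen'] using this
  have hmem : ∀ (k : Equiv.Perm V), k ∈ K → ∀ x,
      x ∈ MulAction.orbit K a ∪ MulAction.orbit K (G.inv c a) →
      k x ∈ MulAction.orbit K a ∪ MulAction.orbit K (G.inv c a) := by
    intro k hk x hx
    rcases hx with h | h
    · exact Or.inl (smul_mem_orbit_of_mem hk h)
    · exact Or.inr (smul_mem_orbit_of_mem hk h)
  apply orbits_le_two G.inv gen' G.invol G.conn a (G.inv c a)
  intro d x hx
  by_cases hd : d = c
  · rw [hd]
    by_cases h1 : x = a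
    · subst h1; exact Or.inr (MulAction.mem_orbit_self _)
    by_cases h2 : x = G.inv c a
    · subst h2; rw [hinv]; exact Or.inl (MulAction.mem_orbit_self _)
    by_cases h3 : x = b
    · subst h3; exact hB
    by_cases h4 : x = G.inv c b
    · subst h4; rw [hinv]; exact hb
    · rw [← hτout x h1 h2 h3 h4]
      exact hmem τ hτK x hx
  · have hgd : (G.inv d : Equiv.Perm V) = gen' d := by simp [hgen', hd]
    rw [hgd]
    exact hmem (gen' d) (hK d) x hx

end SwitchHelpers


/-- Switching a `ρ₃`-pair of a bipartite 4-colored graph yields a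
(possibly disconnected) properly 4-edge-colored 4-regular graph with at most two
connected components, each of which is bipartite (the original bipartition still
works). -/
theorem rho3_switch_at_most_two_bipartite_components (G : FourColoredGraph V)
    (β : V → Bool) (hβ : ∀ (c : Fin 4) (w : V), β (G.inv c w) ≠ β w)
    (a b : V) (c : Fin 4) (hba : b ≠ a) (hbe : b ≠ G.inv c a)
    (hρ3 : ∀ j, j ≠ c → b ∈ residF G.inv {c, j} a) :
    ∃ τ : Equiv.Perm V, IsSwitch G β a b c τ ∧
      {O : Set V | ∃ w, O = MulAction.orbit
          (Subgroup.closure (Set.range (fun d => if d = c then τ else G.inv d))) w}.ncard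
        ≤ 2 ∧
      ∀ (d : Fin 4) (w : V), β ((if d = c then τ else G.inv d) w) ≠ β w := by
  clear hρ3
  have hinv : ∀ x, G.inv c (G.inv c x) = x := fun x => by
    have h := congrArg (fun g : Equiv.Perm V => g x) (G.invol c)
    simpa using h
  have haA : a ≠ G.inv c a := (G.fpf c a).symm
  have hbB : b ≠ G.inv c b := (G.fpf c b).symm
  have hab : a ≠ b := hba.symm
  have hAb : G.inv c a ≠ b := hbe.symm
  have haB : a ≠ G.inv c b := fun h => hbe (by rw [h, hinv])
  have hAB : G.inv c a ≠ G.inv c b := fun h => hab ((G.inv c).injective h)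
  by_cases hcase : β b = β a
  · -- τ : a ↔ inv c b, b ↔ inv c a
    refine ⟨G.inv c * (Equiv.swap a b * Equiv.swap (G.inv c a) (G.inv c b)), ?_⟩
    set τ := G.inv c * (Equiv.swap a b * Equiv.swap (G.inv c a) (G.inv c b)) with hτdef
    have happ : ∀ w, τ w = G.inv c (Equiv.swap a b (Equiv.swap (G.inv c a) (G.inv c b) w)) :=
      fun w => rfl
    have hτa : τ a = G.inv c b := by
      rw [happ, Equiv.swap_apply_of_ne_of_ne haA haB, Equiv.swap_apply_left]
    have hτb : τ b = G.inv c a := by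
      rw [happ, Equiv.swap_apply_of_ne_of_ne hbe hbB, Equiv.swap_apply_right]
    have hτA : τ (G.inv c a) = b := by
      rw [happ, Equiv.swap_apply_left, Equiv.swap_apply_of_ne_of_ne haB.symm hbB.symm, hinv]
    have hτB : τ (G.inv c b) = a := by
      rw [happ, Equiv.swap_apply_right, Equiv.swap_apply_of_ne_of_ne haA.symm hAb, hinv]
    have hτout : ∀ w, w ≠ a → w ≠ G.inv c a → w ≠ b → w ≠ G.inv c b → τ w = G.inv c w := by
      intro w h1 h2 h3 h4
      rw [happ, Equiv.swap_apply_of_ne_of_ne h2 h4, Equiv.swap_apply_of_ne_of_ne h1 h3]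
    have hττ : τ * τ = 1 :=
      switch_invol G a b c τ hinv hτout (by rw [hτa, hτB]) (by rw [hτA, hτb])
        (by rw [hτb, hτA]) (by rw [hτB, hτa])
    have hfpf : ∀ w, τ w ≠ w :=
      switch_fpf G a b c τ hτout (by rw [hτa]; exact haB.symm) (by rw [hτA]; exact hbe)
        (by rw [hτb]; exact hAb) (by rw [hτB]; exact haB)
    have hτK : τ ∈ Subgroup.closure
        (Set.range (fun d => if d = c then τ else G.inv d)) := by
      have := Subgroup.subset_closure
        (Set.mem_range_self (f := fun d => if d = c then τ else G.inv d) c)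
      simpa using this
    refine ⟨⟨hττ, hfpf, hτout, fun h => absurd hcase h, fun _ => hτa⟩, ?_, ?_⟩
    · refine switch_orbits G a b c τ hinv hτout ?_ ?_
      · exact Or.inr ⟨⟨τ, hτK⟩, hτA⟩
      · exact Or.inl ⟨⟨τ, hτK⟩, hτa⟩
    · intro d w
      by_cases hd : d = c
      · rw [hd]
        simp only [if_pos rfl]
        refine switch_bip G β hβ a b c τ hτout ?_ ?_ ?_ ?_ w
        · rw [hτa, ← hcase]; exact hβ c b
        · rw [hτA, hcase]; exact (hβ c a).symm
        · rw [hτb, hcase]; exact hβ c a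
        · rw [hτB, ← hcase]; exact (hβ c b).symm
      · simp only [if_neg hd]; exact hβ d w
  · -- τ : a ↔ b, inv c a ↔ inv c b
    refine ⟨G.inv c * (Equiv.swap a (G.inv c b) * Equiv.swap b (G.inv c a)), ?_⟩
    set τ := G.inv c * (Equiv.swap a (G.inv c b) * Equiv.swap b (G.inv c a)) with hτdef
    have happ : ∀ w, τ w = G.inv c (Equiv.swap a (G.inv c b) (Equiv.swap b (G.inv c a) w)) :=
      fun w => rfl
    have hτa : τ a = b := by
      rw [happ, Equiv.swap_apply_of_ne_of_ne hab haA, Equiv.swap_apply_left, hinv]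
    have hτb : τ b = a := by
      rw [happ, Equiv.swap_apply_left, Equiv.swap_apply_of_ne_of_ne haA.symm hAB, hinv]
    have hτA : τ (G.inv c a) = G.inv c b := by
      rw [happ, Equiv.swap_apply_right, Equiv.swap_apply_of_ne_of_ne hba hbB]
    have hτB : τ (G.inv c b) = G.inv c a := by
      rw [happ, Equiv.swap_apply_of_ne_of_ne hbB.symm hAB.symm, Equiv.swap_apply_right]
    have hτout : ∀ w, w ≠ a → w ≠ G.inv c a → w ≠ b → w ≠ G.inv c b → τ w = G.inv c w := by
      intro w h1 h2 h3 h4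
      rw [happ, Equiv.swap_apply_of_ne_of_ne h3 h2, Equiv.swap_apply_of_ne_of_ne h1 h4]
    have hττ : τ * τ = 1 :=
      switch_invol G a b c τ hinv hτout (by rw [hτa, hτb]) (by rw [hτA, hτB])
        (by rw [hτb, hτa]) (by rw [hτB, hτA])
    have hfpf : ∀ w, τ w ≠ w :=
      switch_fpf G a b c τ hτout (by rw [hτa]; exact hba) (by rw [hτA]; exact hAB.symm)
        (by rw [hτb]; exact hab) (by rw [hτB]; exact hAB)
    have hτK : τ ∈ Subgroup.closure
        (Set.range (fun d => if d = c then τ else G.inv d)) := by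
      have := Subgroup.subset_closure
        (Set.mem_range_self (f := fun d => if d = c then τ else G.inv d) c)
      simpa using this
    refine ⟨⟨hττ, hfpf, hτout, fun _ => hτa, fun h => absurd h hcase⟩, ?_, ?_⟩
    · refine switch_orbits G a b c τ hinv hτout ?_ ?_
      · exact Or.inl ⟨⟨τ, hτK⟩, hτa⟩
      · exact Or.inr ⟨⟨τ, hτK⟩, hτA⟩
    · intro d w
      by_cases hd : d = c
      · rw [hd]
        simp only [if_pos rfl]
        refine switch_bip G β hβ a b c τ hτout ?_ ?_ ?_ ?_ w
        · rw [hτa]; exact hcase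
        · rw [hτA]; exact bool_aux _ _ _ _ (hβ c b) (hβ c a) hcase
        · rw [hτb]; exact fun h => hcase h.symm
        · rw [hτB]; exact bool_aux _ _ _ _ (hβ c a) (hβ c b) (fun h => hcase h.symm)
      · simp only [if_neg hd]; exact hβ d w
end

section
/- Two 4-colored graphs are isomorphic if and only if they have the same code. -/
variable {V : Type} [Fintype V] [DecidableEq V]

/-- The list encoding of a colored-graph datum `F` on `Fin n`:
the concatenated table of values of the four involutions. -/
def encList (n : ℕ) (F : Fin 4 → Fin n → Fin n) : List ℕ :=
  ((List.finRange 4).map fun c => (List.finRange n).map fun w => (F c w : ℕ)).flatten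

/-- The code of a 4-colored graph on `Fin n`: the (lexicographically) minimal
list encoding over all relabelings of the vertices and permutations of the
colors, i.e. over all isomorphism-induced encodings. -/
noncomputable def code (n : ℕ) (G : FourColoredGraph (Fin n)) : List ℕ :=
  ((Finset.univ : Finset ((Fin n ≃ Fin n) × Equiv.Perm (Fin 4))).image
      (fun p => encList n fun c w => p.1 (G.inv (p.2 c) (p.1.symm w)))).min'
    (Finset.Nonempty.image ⟨⟨Equiv.refl (Fin n), 1⟩, Finset.mem_univ _⟩ _)

lemma flatten_eq_of (n : ℕ) : ∀ (l l' : List (List ℕ)),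
    l.length = l'.length → (∀ x ∈ l, x.length = n) → (∀ x ∈ l', x.length = n) →
    l.flatten = l'.flatten → l = l' := by
  intro l
  induction l with
  | nil =>
    intro l' h _ _ _
    exact (List.length_eq_zero_iff.mp h.symm).symm
  | cons a l ih =>
    intro l' h h1 h2 h3
    cases l' with
    | nil => simp at h
    | cons b l' =>
      simp only [List.flatten_cons] at h3
      have hlen : a.length = b.length := by
        rw [h1 a List.mem_cons_self, h2 b List.mem_cons_self]
      obtain ⟨hab, hrest⟩ := List.append_inj h3 hlen
      have := ih l' (by simpa using h) (fun x hx => h1 x (List.mem_cons_of_mem _ hx))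
        (fun x hx => h2 x (List.mem_cons_of_mem _ hx)) hrest
      rw [hab, this]

lemma encList_inj {n : ℕ} {F F' : Fin 4 → Fin n → Fin n}
    (h : encList n F = encList n F') : F = F' := by
  unfold encList at h
  have hl := flatten_eq_of n _ _ (by simp) (by simp) (by simp) h
  rw [List.map_eq_map_iff] at hl
  funext c w
  have hc := hl c (List.mem_finRange c)
  rw [List.map_eq_map_iff] at hc
  exact Fin.val_injective (hc w (List.mem_finRange w))

theorem Equiv.Perm.apply_inv_self {α : Type*} (σ : Equiv.Perm α) (x : α) : σ (σ⁻¹ x) = x :=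
  σ.apply_symm_apply x

lemma min'_congr (s t : Finset (List ℕ)) (hs : s.Nonempty) (ht : t.Nonempty)
    (h : s = t) : s.min' hs = t.min' ht := by subst h; rfl

/-- Two 4-colored graphs are isomorphic (via a graph isomorphism
together with a permutation of the colors) if and only if they have the same
code. -/
theorem isomorphic_iff_same_code (n : ℕ)
    (G G' : FourColoredGraph (Fin n)) :
    code n G = code n G' ↔
      ∃ (φ : Fin n ≃ Fin n) (σ : Equiv.Perm (Fin 4)),
        ∀ (c : Fin 4) (w : Fin n), φ (G.inv c w) = G'.inv (σ c) (φ w) := by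
  constructor
  · intro h
    have hG : code n G ∈
        ((Finset.univ : Finset ((Fin n ≃ Fin n) × Equiv.Perm (Fin 4))).image
          (fun p => encList n fun c w => p.1 (G.inv (p.2 c) (p.1.symm w)))) :=
      Finset.min'_mem _ _
    have hG' : code n G' ∈
        ((Finset.univ : Finset ((Fin n ≃ Fin n) × Equiv.Perm (Fin 4))).image
          (fun p => encList n fun c w => p.1 (G'.inv (p.2 c) (p.1.symm w)))) :=
      Finset.min'_mem _ _
    obtain ⟨p, -, hp⟩ := Finset.mem_image.mp hG
    obtain ⟨q, -, hq⟩ := Finset.mem_image.mp hG'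
    have heq : encList n (fun c w => p.1 (G.inv (p.2 c) (p.1.symm w)))
        = encList n (fun c w => q.1 (G'.inv (q.2 c) (q.1.symm w))) := by
      rw [hp, hq, h]
    have hF := encList_inj heq
    refine ⟨p.1.trans q.1.symm, q.2 * p.2⁻¹, fun c w => ?_⟩
    have := congrFun (congrFun hF (p.2⁻¹ c)) (p.1 w)
    simp only [Equiv.Perm.apply_inv_self, Equiv.symm_apply_apply] at this
    simp only [Equiv.trans_apply, Equiv.Perm.mul_apply, this, Equiv.symm_apply_apply]
  · rintro ⟨φ, σ, hiso⟩
    have hinv : ∀ (c : Fin 4) (w : Fin n), φ.symm (G'.inv c w) = G.inv (σ⁻¹ c) (φ.symm w) := by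
      intro c w
      apply φ.injective
      rw [Equiv.apply_symm_apply, hiso, Equiv.apply_symm_apply, Equiv.Perm.apply_inv_self]
    apply min'_congr
    apply Finset.Subset.antisymm
    · intro x hx
      obtain ⟨p, -, hp⟩ := Finset.mem_image.mp hx
      refine Finset.mem_image.mpr ⟨⟨φ.symm.trans p.1, σ * p.2⟩, Finset.mem_univ _, ?_⟩
      rw [← hp]
      congr 1
      funext c w
      simp only [Equiv.trans_apply, Equiv.symm_trans_apply, Equiv.symm_symm,
        Equiv.Perm.mul_apply]
      rw [hinv]
      simp
    · intro x hx
      obtain ⟨p, -, hp⟩ := Finset.mem_image.mp hx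
      refine Finset.mem_image.mpr ⟨⟨φ.trans p.1, σ⁻¹ * p.2⟩, Finset.mem_univ _, ?_⟩
      rw [← hp]
      congr 1
      funext c w
      simp only [Equiv.trans_apply, Equiv.symm_trans_apply, Equiv.symm_symm,
        Equiv.Perm.mul_apply]
      rw [hiso]
      simp
end
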